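/- arXiv:2112.01744 — 2 statements merged into one kernel-verified Lean document; each statement's English description precedes it below -/
import Mathlib

section
/- Let x lie in the open unit disk of ℝ² and v ∈ ℝ², v ≠ 0, and write n = (n₁,n₂) := x_b(x,v) and v = (v₁,v₂), so v·n < 0. Then the map x ↦ R_{x_b(x,v)} (with v fixed) is differentiable, and the 2×2 Jacobian matrices of its columns are: ∇_x(R¹_{x_b(x,v)}) = (1/(v·n))·[[−4v₂n₁n₂, 4v₁n₁n₂],[−2v₂(n₂²−n₁²), 2v₁(n₂²−n₁²)]] and ∇_x(R²_{x_b(x,v)}) = (1/(v·n))·[[−2v₂(n₂²−n₁²), 2v₁(n₂²−n₁²)],[4v₂n₁n₂, −4v₁n₁n₂]]. -/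
noncomputable section

open Matrix Real Set

/-- The Euclidean plane ℝ². -/
abbrev E : Type := EuclideanSpace ℝ (Fin 2)

/-- Dot product on ℝ². -/
def dot (a b : E) : ℝ := a 0 * b 0 + a 1 * b 1

/-- Build a vector of ℝ² from its components. -/
def toE (f : Fin 2 → ℝ) : E := (WithLp.equiv 2 (Fin 2 → ℝ)).symm f

/-- Tensor (outer) product a⊗b, (a⊗b)_{ij} = aᵢ bⱼ. -/
def outer (a b : E) : Matrix (Fin 2) (Fin 2) ℝ := Matrix.of fun i j => a i * b j

/-- Matrix acting on a column vector. -/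
def mulV (M : Matrix (Fin 2) (Fin 2) ℝ) (v : E) : E := toE fun i => M i 0 * v 0 + M i 1 * v 1

/-- Row vector multiplied by a matrix on the right. -/
def vMulM (w : E) (M : Matrix (Fin 2) (Fin 2) ℝ) : E := toE fun j => w 0 * M 0 j + w 1 * M 1 j

/-- Specular reflection matrix R_n = I - 2 n⊗n. -/
def Rmat (n : E) : Matrix (Fin 2) (Fin 2) ℝ := 1 - (2 : ℝ) • outer n n

/-- The matrix A_{v,n} = ((v·n) I + n⊗v)(I - (v⊗n)/(v·n)). -/
def Amat (v n : E) : Matrix (Fin 2) (Fin 2) ℝ :=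
  (dot v n • (1 : Matrix (Fin 2) (Fin 2) ℝ) + outer n v) *
    (1 - (dot v n)⁻¹ • outer v n)

/-- Counterclockwise rotation by π/2. -/
def Qmat : Matrix (Fin 2) (Fin 2) ℝ := !![0, -1; 1, 0]

/-- Backward exit time from the closed unit disk. -/
def tb (x v : E) : ℝ := sSup {s : ℝ | 0 ≤ s ∧ ‖x - s • v‖ ≤ 1}

/-- Backward exit point from the closed unit disk. -/
def xb (x v : E) : E := x - tb x v • v

/-- The i-th column of a 2×2 matrix, as a vector of ℝ². -/
def colE (M : Matrix (Fin 2) (Fin 2) ℝ) (i : Fin 2) : E := toE fun k => M k i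

/-- A 2×2 matrix as a continuous linear map ℝ² → ℝ². -/
def toCLM (M : Matrix (Fin 2) (Fin 2) ℝ) : E →L[ℝ] E :=
  LinearMap.toContinuousLinearMap (Matrix.toEuclideanLin M)

/-!
Inside the disk, `t_b(x, v)` is the larger root of `|x - t v|² = 1`, an explicit smooth function of
`x` whose gradient is `n / (v·n)` with `n = x_b(x, v)`, where `v·n = -√(discriminant) < 0`. Hence
`∇x_b = I - v ⊗ n / (v·n)`. The `i`-th column of `R_n` is `eᵢ - 2 nᵢ n`, whose derivative in `n` is
`h ↦ -2 (hᵢ n + nᵢ h)`; the chain rule and an entrywise computation give the two Jacobians.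
-/

open scoped RealInnerProductSpace

section ExitTime

variable {F : Type*} [NormedAddCommGroup F] [InnerProductSpace ℝ F]

def exitDiscriminant (v y : F) : ℝ := ⟪v, y⟫ ^ 2 + ‖v‖ ^ 2 * (1 - ‖y‖ ^ 2)

def ballExitTime (v y : F) : ℝ := (⟪v, y⟫ + √(exitDiscriminant v y)) / ‖v‖ ^ 2

lemma norm_sub_smul_sq (y v : F) (c : ℝ) :
    ‖y - c • v‖ ^ 2 = ‖y‖ ^ 2 - 2 * c * ⟪v, y⟫ + c ^ 2 * ‖v‖ ^ 2 := by
  rw [norm_sub_sq_real, inner_smul_right, norm_smul, real_inner_comm, mul_pow, Real.norm_eq_abs,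
    sq_abs]
  ring

lemma sq_inner_le_exitDiscriminant {y : F} (v : F) (hy : ‖y‖ ≤ 1) :
    ⟪v, y⟫ ^ 2 ≤ exitDiscriminant v y := by
  have : ‖y‖ ^ 2 ≤ 1 := pow_le_one₀ (norm_nonneg y) hy
  unfold exitDiscriminant; nlinarith [sq_nonneg ‖v‖]

lemma isGreatest_ballExitTime {y v : F} (hy : ‖y‖ ≤ 1) (hv : v ≠ 0) :
    IsGreatest {s : ℝ | 0 ≤ s ∧ ‖y - s • v‖ ≤ 1} (ballExitTime v y) := by
  have ha : 0 < ‖v‖ ^ 2 := by positivity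
  have hbD := sq_inner_le_exitDiscriminant v hy
  have hs : √(exitDiscriminant v y) ^ 2 = ⟪v, y⟫ ^ 2 + ‖v‖ ^ 2 * (1 - ‖y‖ ^ 2) :=
    Real.sq_sqrt ((sq_nonneg _).trans hbD)
  have hmem (c : ℝ) : ‖y - c • v‖ ≤ 1 ↔ ‖y‖ ^ 2 - 2 * c * ⟪v, y⟫ + c ^ 2 * ‖v‖ ^ 2 ≤ 1 := by
    rw [← norm_sub_smul_sq, sq_le_one_iff₀ (norm_nonneg _)]
  unfold ballExitTime
  refine ⟨⟨div_nonneg ?_ ha.le, (hmem _).2 (le_of_eq ?_)⟩, fun c ⟨_, hc⟩ ↦ ?_⟩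
  · linarith [neg_abs_le ⟪v, y⟫, Real.abs_le_sqrt hbD]
  · field_simp
    linear_combination hs
  · have hc' : (c * ‖v‖ ^ 2 - ⟪v, y⟫) ^ 2 ≤ exitDiscriminant v y := by
      rw [hmem] at hc
      unfold exitDiscriminant
      nlinarith
    rw [le_div_iff₀ ha]
    linarith [le_abs_self (c * ‖v‖ ^ 2 - ⟪v, y⟫), Real.abs_le_sqrt hc']

lemma inner_sub_ballExitTime_smul (y : F) {v : F} (hv : v ≠ 0) :
    ⟪v, y - ballExitTime v y • v⟫ = -√(exitDiscriminant v y) := by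
  rw [inner_sub_right, inner_smul_right, real_inner_self_eq_norm_sq, ballExitTime]
  field_simp
  ring

lemma exitDiscriminant_pos {x : F} (v : F) (hx : ‖x‖ < 1) (hv : v ≠ 0) :
    0 < exitDiscriminant v x := by
  have : 0 < ‖v‖ ^ 2 * (1 - ‖x‖ ^ 2) :=
    mul_pos (by positivity) (by nlinarith [norm_nonneg x])
  unfold exitDiscriminant
  positivity

lemma hasFDerivAt_ballExitTime {x v : F} (hx : ‖x‖ < 1) (hv : v ≠ 0) :
    HasFDerivAt (ballExitTime v)
      (⟪v, x - ballExitTime v x • v⟫⁻¹ • innerSL ℝ (x - ballExitTime v x • v)) x := by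
  have hD := exitDiscriminant_pos v hx hv
  have hb := (innerSL ℝ v).hasFDerivAt (x := x)
  have hDer : HasFDerivAt (exitDiscriminant v) _ x := (hb.pow 2).add
    (((hasFDerivAt_const (1 : ℝ) x).sub (hasStrictFDerivAt_norm_sq x).hasFDerivAt).const_mul
      (‖v‖ ^ 2))
  have hT : HasFDerivAt (fun y ↦ (⟪v, y⟫ + √(exitDiscriminant v y)) * (‖v‖ ^ 2)⁻¹) _ x :=
    (hb.add (hDer.sqrt hD.ne')).mul_const (‖v‖ ^ 2)⁻¹
  simp only [← div_eq_mul_inv] at hT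
  refine hT.congr_fderiv ?_
  ext h
  rw [inner_sub_ballExitTime_smul x hv]
  have := norm_pos_iff.2 hv
  simp only [ballExitTime, _root_.add_apply, _root_.sub_apply, _root_.smul_apply, coe_innerSL_apply,
    _root_.neg_apply, map_sub, map_smul, smul_eq_mul, nsmul_eq_mul, zero_sub]
  field_simp
  ring

end ExitTime

lemma tb_eq_ballExitTime {y v : E} (hy : ‖y‖ ≤ 1) (hv : v ≠ 0) : tb y v = ballExitTime v y :=
  (isGreatest_ballExitTime hy hv).csSup_eq

lemma xb_eq {y v : E} (hy : ‖y‖ ≤ 1) (hv : v ≠ 0) : xb y v = y - ballExitTime v y • v := by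
  rw [xb, tb_eq_ballExitTime hy hv]

lemma inner_xb_neg {x v : E} (hx : ‖x‖ < 1) (hv : v ≠ 0) : ⟪v, xb x v⟫ < 0 := by
  rw [xb_eq hx.le hv, inner_sub_ballExitTime_smul x hv, neg_lt_zero]
  exact Real.sqrt_pos.2 (exitDiscriminant_pos v hx hv)

lemma hasFDerivAt_xb {x v : E} (hx : ‖x‖ < 1) (hv : v ≠ 0) :
    HasFDerivAt (xb · v)
      (ContinuousLinearMap.id ℝ E - (⟪v, xb x v⟫⁻¹ • innerSL ℝ (xb x v)).smulRight v) x := by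
  have hev : (xb · v) =ᶠ[nhds x] fun y ↦ y - ballExitTime v y • v := by
    filter_upwards [Metric.isOpen_ball.mem_nhds (mem_ball_zero_iff.2 hx)] with y hy
    exact xb_eq (mem_ball_zero_iff.1 hy).le hv
  rw [xb_eq hx.le hv]
  exact ((hasFDerivAt_id x).sub
    ((hasFDerivAt_ballExitTime hx hv).smul_const v)).congr_of_eventuallyEq hev

lemma colE_Rmat (n : E) (i : Fin 2) :
    colE (Rmat n) i = EuclideanSpace.single i 1 - (2 * n i) • n := by
  ext k
  simp only [colE, toE, Rmat, outer, Matrix.sub_apply, Matrix.one_apply, Matrix.smul_apply,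
    Matrix.of_apply, WithLp.equiv_symm_apply, PiLp.sub_apply, PiLp.smul_apply, PiLp.single_apply,
    smul_eq_mul]
  ring

lemma hasFDerivAt_colE_Rmat (n : E) (i : Fin 2) :
    HasFDerivAt (fun m ↦ colE (Rmat m) i)
      ((-2 : ℝ) • ((EuclideanSpace.proj i).smulRight n + n i • ContinuousLinearMap.id ℝ E)) n := by
  simp only [colE_Rmat]
  have hproj := (EuclideanSpace.proj i : E →L[ℝ] ℝ).hasFDerivAt (x := n)
  have := (hasFDerivAt_const (EuclideanSpace.single i (1 : ℝ)) n).sub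
    ((hproj.const_mul 2).smul (hasFDerivAt_id n))
  refine this.congr_fderiv ?_
  ext h
  simp only [_root_.add_apply, _root_.sub_apply, _root_.smul_apply, _root_.zero_apply,
    ContinuousLinearMap.smulRight_apply, ContinuousLinearMap.id_apply, PiLp.proj_apply, id_eq,
    PiLp.sub_apply, PiLp.add_apply, PiLp.smul_apply, PiLp.zero_apply, smul_eq_mul]
  ring

lemma dot_eq_inner (a b : E) : dot a b = ⟪a, b⟫ := by
  simp only [dot, PiLp.inner_apply, RCLike.inner_apply, conj_trivial, Fin.sum_univ_two]
  ring

lemma toCLM_apply (M : Matrix (Fin 2) (Fin 2) ℝ) (h : E) (k : Fin 2) :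
    toCLM M h k = M k 0 * h 0 + M k 1 * h 1 := by
  simp [toCLM, Matrix.toEuclideanLin, Matrix.mulVec, dotProduct, Fin.sum_univ_two]

/-- Jacobians in x of the columns of x ↦ R_{x_b(x,v)}. -/
theorem stmt7 (x v : E) (hx : ‖x‖ < 1) (hv : v ≠ 0) :
    let n := xb x v
    HasFDerivAt (fun y => colE (Rmat (xb y v)) 0)
      (toCLM ((dot v n)⁻¹ •
        !![-4 * v 1 * n 0 * n 1, 4 * v 0 * n 0 * n 1;
           -2 * v 1 * (n 1 ^ 2 - n 0 ^ 2), 2 * v 0 * (n 1 ^ 2 - n 0 ^ 2)])) x ∧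
    HasFDerivAt (fun y => colE (Rmat (xb y v)) 1)
      (toCLM ((dot v n)⁻¹ •
        !![-2 * v 1 * (n 1 ^ 2 - n 0 ^ 2), 2 * v 0 * (n 1 ^ 2 - n 0 ^ 2);
           4 * v 1 * n 0 * n 1, -4 * v 0 * n 0 * n 1])) x := by
  intro n
  have hvn : dot v n ≠ 0 := by rw [dot_eq_inner]; exact (inner_xb_neg hx hv).ne
  have hxb : HasFDerivAt (xb · v)
      (ContinuousLinearMap.id ℝ E - ((dot v n)⁻¹ • innerSL ℝ n).smulRight v) x := by
    rw [dot_eq_inner]; exact hasFDerivAt_xb hx hv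
  have hcol (i : Fin 2) := (hasFDerivAt_colE_Rmat n i).comp x hxb
  clear_value n
  refine ⟨(hcol 0).congr_fderiv ?_, (hcol 1).congr_fderiv ?_⟩ <;>
  · ext h k
    simp only [toCLM_apply, ContinuousLinearMap.comp_apply, _root_.sub_apply, _root_.smul_apply,
      _root_.add_apply, ContinuousLinearMap.smulRight_apply, ContinuousLinearMap.id_apply,
      coe_innerSL_apply, PiLp.proj_apply, PiLp.sub_apply, PiLp.add_apply, PiLp.smul_apply,
      smul_eq_mul, Matrix.smul_apply, ← dot_eq_inner]
    fin_cases k <;> simp only [Fin.zero_eta, Fin.mk_one, Matrix.of_apply, Matrix.cons_val',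
      Matrix.cons_val_zero, Matrix.cons_val_one, Matrix.cons_val_fin_one] <;> field_simp <;>
      simp only [dot] <;> ring
end
end

section
/- Let n = (n₁,n₂) ∈ ℝ² be a unit vector and v = (v₁,v₂) ∈ ℝ² with v·n ≠ 0. Then the map v ↦ A_{v,n} (with n fixed) is differentiable, and the 2×2 Jacobian matrices in v of the columns of −2A_{v,n} are: ∇_v(−2A¹_{v,n}) = [[−2v₂²n₁/(v·n)², −2n₂ − 2v₁²n₁²n₂/(v·n)² + 4v₁v₂n₁³/(v·n)² + 2v₂²n₁²n₂/(v·n)²],[−2v₂²n₂/(v·n)², 2n₁ − 2v₁²n₁n₂²/(v·n)² + 4v₁v₂n₁²n₂/(v·n)² + 2v₂²n₁n₂²/(v·n)²]] and ∇_v(−2A²_{v,n}) = [[2n₂ + 2v₁²n₁²n₂/(v·n)² + 4v₁v₂n₁n₂²/(v·n)² − 2v₂²n₁²n₂/(v·n)², −2v₁²n₁/(v·n)²],[−2n₁ − 2v₂²n₁n₂²/(v·n)² + 4v₁v₂n₂³/(v·n)² + 2v₁²n₁n₂²/(v·n)², −2v₁²n₂/(v·n)²]]. -/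
noncomputable section

open Matrix Real Set

/-!
Since `(n⊗v)(v⊗n) = |v|² n⊗n`, expanding the product gives
`A_{v,n} = (v·n) I - v⊗n + n⊗v - (|v|² / (v·n)) n⊗n`.
Every entry is therefore a linear function of `v` plus a multiple of the quotient `|v|² / (v·n)`,
which is differentiated by the quotient rule wherever `v·n ≠ 0`. The resulting Jacobians hold for
any `n`; the formulas of the statement are their simplification under `|n| = 1`.
-/

open Topology

lemma outer_mul_outer (a b c e : E) : outer a b * outer c e = dot b c • outer a e := by
  ext i j
  simp [outer, dot, Matrix.mul_apply, Fin.sum_univ_two]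
  ring

lemma Amat_eq {v n : E} (hv : dot v n ≠ 0) :
    Amat v n = dot v n • 1 - outer v n + outer n v - (dot v v / dot v n) • outer n n := by
  simp only [Amat, mul_sub, add_mul, mul_one, one_mul, Matrix.smul_mul, Matrix.mul_smul,
    outer_mul_outer, smul_smul]
  match_scalars <;> field_simp

lemma Amat_apply {v n : E} (hv : dot v n ≠ 0) (i j : Fin 2) :
    Amat v n i j = dot v n * (1 : Matrix (Fin 2) (Fin 2) ℝ) i j - v i * n j + n i * v j
      - dot v v / dot v n * (n i * n j) := by
  simp [Amat_eq hv, outer]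

lemma dot_self_eq_norm_sq (a : E) : dot a a = ‖a‖ ^ 2 := by
  rw [EuclideanSpace.real_norm_sq_eq]
  simp [dot, sq]

lemma hasFDerivAt_dot_left (a v : E) :
    HasFDerivAt (fun w => dot w a)
      (a 0 • (EuclideanSpace.proj 0 : E →L[ℝ] ℝ) + a 1 • (EuclideanSpace.proj 1 : E →L[ℝ] ℝ)) v := by
  have hx (k : Fin 2) := PiLp.hasFDerivAt_apply (𝕜 := ℝ) 2 v k
  refine ((hx 0).mul_const (a 0)).add ((hx 1).mul_const (a 1)) |>.congr_fderiv ?_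
  ext h
  simp

lemma hasFDerivAt_dot_self (v : E) :
    HasFDerivAt (fun w => dot w w)
      ((2 * v 0) • (EuclideanSpace.proj 0 : E →L[ℝ] ℝ)
        + (2 * v 1) • (EuclideanSpace.proj 1 : E →L[ℝ] ℝ)) v := by
  have hx (k : Fin 2) := PiLp.hasFDerivAt_apply (𝕜 := ℝ) 2 v k
  refine ((hx 0).mul (hx 0)).add ((hx 1).mul (hx 1)) |>.congr_fderiv ?_
  ext h
  simp
  ring

def colAmatJacobian (v n : E) (j : Fin 2) : Matrix (Fin 2) (Fin 2) ℝ :=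
  Matrix.of fun i k =>
    (1 : Matrix (Fin 2) (Fin 2) ℝ) i j * n k - (1 : Matrix (Fin 2) (Fin 2) ℝ) i k * n j
      + n i * (1 : Matrix (Fin 2) (Fin 2) ℝ) j k
      - n i * n j * (2 * v k * dot v n - dot v v * n k) / dot v n ^ 2

lemma hasFDerivAt_Amat_apply {v : E} (n : E) (hv : dot v n ≠ 0) (i j : Fin 2) :
    HasFDerivAt (fun w => Amat w n i j)
      (colAmatJacobian v n j i 0 • (EuclideanSpace.proj 0 : E →L[ℝ] ℝ)
        + colAmatJacobian v n j i 1 • (EuclideanSpace.proj 1 : E →L[ℝ] ℝ)) v := by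
  have hx (k : Fin 2) := PiLp.hasFDerivAt_apply (𝕜 := ℝ) 2 v k
  have hd := hasFDerivAt_dot_left n v
  have hq := (hasFDerivAt_dot_self v).mul ((hasDerivAt_inv hv).comp_hasFDerivAt v hd)
  have hA : (fun w => Amat w n i j) =ᶠ[𝓝 v] fun w => dot w n * (1 : Matrix (Fin 2) (Fin 2) ℝ) i j
      - w i * n j + n i * w j - dot w w * (dot w n)⁻¹ * (n i * n j) := by
    have hcont : Continuous fun w : E => dot w n := by unfold dot; fun_prop
    filter_upwards [hcont.continuousAt.eventually_ne hv] with w hw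
    rw [Amat_apply hw, div_eq_mul_inv]
  refine ((((hd.mul_const _).sub ((hx i).mul_const _)).add ((hx j).const_mul _)).sub
    (hq.mul_const _)).congr_fderiv ?_ |>.congr_of_eventuallyEq hA
  ext h
  fin_cases i <;> fin_cases j <;> simp [colAmatJacobian, Matrix.one_apply] <;> field_simp <;> ring

lemma toCLM_apply_apply (M : Matrix (Fin 2) (Fin 2) ℝ) (h : E) (i : Fin 2) :
    toCLM M h i = M i 0 * h 0 + M i 1 * h 1 := by
  fin_cases i <;> simp [toCLM, Matrix.toLpLin_apply]

lemma toCLM_smul (c : ℝ) (M : Matrix (Fin 2) (Fin 2) ℝ) : toCLM (c • M) = c • toCLM M := by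
  ext h i
  simp [toCLM_apply_apply]
  ring

lemma colE_smul (c : ℝ) (M : Matrix (Fin 2) (Fin 2) ℝ) (j : Fin 2) :
    colE (c • M) j = c • colE M j :=
  rfl

lemma hasFDerivAt_toE_iff {f : E → Fin 2 → ℝ} {M : Matrix (Fin 2) (Fin 2) ℝ} {v : E} :
    HasFDerivAt (fun w => toE (f w)) (toCLM M) v ↔
      ∀ i, HasFDerivAt (fun w => f w i)
        (M i 0 • (EuclideanSpace.proj 0 : E →L[ℝ] ℝ) + M i 1 • (EuclideanSpace.proj 1 : E →L[ℝ] ℝ))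
        v := by
  have hrow (i : Fin 2) : PiLp.proj 2 (fun _ => ℝ) i ∘L toCLM M =
      M i 0 • (EuclideanSpace.proj 0 : E →L[ℝ] ℝ) + M i 1 • (EuclideanSpace.proj 1 : E →L[ℝ] ℝ) := by
    ext h
    simp [toCLM_apply_apply]
  simp only [← hasFDerivWithinAt_univ, hasFDerivWithinAt_piLp, hrow]
  rfl

lemma hasFDerivAt_colE_Amat {v : E} (n : E) (hv : dot v n ≠ 0) (j : Fin 2) :
    HasFDerivAt (fun w => colE (Amat w n) j) (toCLM (colAmatJacobian v n j)) v :=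
  hasFDerivAt_toE_iff.2 fun i => hasFDerivAt_Amat_apply n hv i j

lemma hasFDerivAt_colE_smul_Amat (c : ℝ) {v : E} (n : E) (hv : dot v n ≠ 0) (j : Fin 2) :
    HasFDerivAt (fun w => colE (c • Amat w n) j) (toCLM (c • colAmatJacobian v n j)) v := by
  simp only [colE_smul, toCLM_smul]
  exact (hasFDerivAt_colE_Amat n hv j).const_smul c

/-- Jacobians in v of the columns of v ↦ −2A_{v,n}. -/
theorem stmt8 (n v : E) (hn : ‖n‖ = 1) (hv : dot v n ≠ 0) :
    let d := dot v n
    HasFDerivAt (fun w => colE ((-2 : ℝ) • Amat w n) 0)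
      (toCLM
        !![-2 * v 1 ^ 2 * n 0 / d ^ 2,
           -2 * n 1 - 2 * v 0 ^ 2 * n 0 ^ 2 * n 1 / d ^ 2 + 4 * v 0 * v 1 * n 0 ^ 3 / d ^ 2
             + 2 * v 1 ^ 2 * n 0 ^ 2 * n 1 / d ^ 2;
           -2 * v 1 ^ 2 * n 1 / d ^ 2,
           2 * n 0 - 2 * v 0 ^ 2 * n 0 * n 1 ^ 2 / d ^ 2 + 4 * v 0 * v 1 * n 0 ^ 2 * n 1 / d ^ 2
             + 2 * v 1 ^ 2 * n 0 * n 1 ^ 2 / d ^ 2]) v ∧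
    HasFDerivAt (fun w => colE ((-2 : ℝ) • Amat w n) 1)
      (toCLM
        !![2 * n 1 + 2 * v 0 ^ 2 * n 0 ^ 2 * n 1 / d ^ 2 + 4 * v 0 * v 1 * n 0 * n 1 ^ 2 / d ^ 2
             - 2 * v 1 ^ 2 * n 0 ^ 2 * n 1 / d ^ 2,
           -2 * v 0 ^ 2 * n 0 / d ^ 2;
           -2 * n 0 - 2 * v 1 ^ 2 * n 0 * n 1 ^ 2 / d ^ 2 + 4 * v 0 * v 1 * n 1 ^ 3 / d ^ 2
             + 2 * v 0 ^ 2 * n 0 * n 1 ^ 2 / d ^ 2,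
           -2 * v 0 ^ 2 * n 1 / d ^ 2]) v := by
  intro d
  have hn2 : n 0 ^ 2 + n 1 ^ 2 = 1 := by
    simpa [dot, hn, sq] using dot_self_eq_norm_sq n
  -- `|n| = 1` is used only in the entries `(i, j)` of column `j`, where
  -- `(v·n)² - 2 vⱼ nⱼ (v·n) + nⱼ² |v|² = v_{1-j}² |n|²`.
  constructor
  · convert hasFDerivAt_colE_smul_Amat (-2) n hv 0 using 2
    ext i k
    fin_cases i <;> fin_cases k <;> simp [colAmatJacobian, d] <;> field_simp <;> simp only [dot]
    · linear_combination (n 0 * v 1 ^ 2) * hn2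
    · ring
    · linear_combination (n 1 * v 1 ^ 2) * hn2
    · ring
  · convert hasFDerivAt_colE_smul_Amat (-2) n hv 1 using 2
    ext i k
    fin_cases i <;> fin_cases k <;> simp [colAmatJacobian, d] <;> field_simp <;> simp only [dot]
    · ring
    · linear_combination (n 0 * v 0 ^ 2) * hn2
    · ring
    · linear_combination (n 1 * v 0 ^ 2) * hn2
end
end
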